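/- arXiv:math/9904165 — 2 statements merged into one kernel-verified Lean document; each statement's English description precedes it below -/
import Mathlib

section
/- Let X be a 2-concave Banach function space and E a Banach space of (Rademacher) cotype 2. Then the vector-valued Banach function space X(E) has cotype 2, with C₂(X(E)) ≤ √2 · M_(2)(X) · C₂(E). -/
/-! Pointwise in `ω`, cotype 2 of `E` bounds `(∑ ‖xᵢ(ω)‖²)^{1/2}` by `C` times the `L₂`-average
of `‖∑ ±xᵢ(ω)‖`, and the Kahane–Khinchine inequality with the optimal constant `√2`
(Latała–Oleszkiewicz) bounds this by `√2` times the `L₁`-average. Taking `X`-norms, 2-concavity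
handles the left side, while the triangle inequality in `X` and Cauchy–Schwarz over the signs
turn the `X`-norm of the `L₁`-average into the Rademacher average of `X(E)`. -/

open Complex MeasureTheory Finset

noncomputable section

namespace Paper

/-- The closed unit strip in the complex plane. -/
def Strip : Set ℂ := {z : ℂ | 0 ≤ z.re ∧ z.re ≤ 1}

/-- The open unit strip in the complex plane. -/
def OStrip : Set ℂ := {z : ℂ | 0 < z.re ∧ z.re < 1}

/-- `N` is a norm on the complex vector space `V`. -/
def IsNormC {V : Type*} [AddCommGroup V] [Module ℂ V] (N : V → ℝ) : Prop :=
  (∀ x, 0 ≤ N x) ∧ (∀ x, N x = 0 → x = 0) ∧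
  (∀ (c : ℂ) (x), N (c • x) = ‖c‖ * N x) ∧ (∀ x y, N (x + y) ≤ N x + N y)

/-- `N` is a lattice norm on `ℝⁿ`. -/
def IsLatticeNorm {n : ℕ} (N : (Fin n → ℝ) → ℝ) : Prop :=
  (∀ x, 0 ≤ N x) ∧ (∀ x, N x = 0 → x = 0) ∧
  (∀ (c : ℝ) (x), N (c • x) = |c| * N x) ∧ (∀ x y, N (x + y) ≤ N x + N y) ∧
  (∀ x y, (∀ i, |x i| ≤ |y i|) → N x ≤ N y)

/-- The `r`-th power `X^r` of a lattice norm: `‖x‖_{X^r} = ‖ |x|^{1/r} ‖_X^r`. -/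
def powNorm {n : ℕ} (r : ℝ) (N : (Fin n → ℝ) → ℝ) (x : Fin n → ℝ) : ℝ :=
  (N fun i => |x i| ^ (1 / r)) ^ r

/-- `N` is `p`-convex with constant `C`. -/
def ConvexWith {n : ℕ} (p C : ℝ) (N : (Fin n → ℝ) → ℝ) : Prop :=
  ∀ (m : ℕ) (x : Fin m → Fin n → ℝ),
    N (fun j => (∑ i, |x i j| ^ p) ^ (1 / p)) ≤ C * (∑ i, N (x i) ^ p) ^ (1 / p)

/-- `N` is `p`-concave with constant `C`. -/
def ConcaveWith {n : ℕ} (p C : ℝ) (N : (Fin n → ℝ) → ℝ) : Prop :=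
  ∀ (m : ℕ) (x : Fin m → Fin n → ℝ),
    (∑ i, N (x i) ^ p) ^ (1 / p) ≤ C * N (fun j => (∑ i, |x i j| ^ p) ^ (1 / p))

/-- The dual lattice norm on `ℝⁿ`. -/
def dualNR {n : ℕ} (N : (Fin n → ℝ) → ℝ) (y : Fin n → ℝ) : ℝ :=
  sSup {r : ℝ | ∃ x, N x ≤ 1 ∧ r = |∑ i, x i * y i|}

/-- The Calderón product norm `X₀^{1-θ}X₁^θ` on `ℝⁿ`. -/
def calNorm {n : ℕ} (θ : ℝ) (N₀ N₁ : (Fin n → ℝ) → ℝ) (f : Fin n → ℝ) : ℝ :=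
  sInf {c : ℝ | ∃ g h : Fin n → ℝ, (∀ i, |f i| = |g i| ^ (1 - θ) * |h i| ^ θ) ∧
    c = N₀ g ^ (1 - θ) * N₁ h ^ θ}

/-- The complex interpolation norm `[N₀,N₁]_θ`, computed via analytic functions
of finite type `z ↦ ∑ φᵢ(z) • vᵢ` on the strip (which, by density, gives the
complex interpolation norm on the intersection for couples with dense intersection). -/
def interpN {D : Type*} [AddCommGroup D] [Module ℂ D]
    (θ : ℝ) (N₀ N₁ : D → ℝ) (x : D) : ℝ :=
  sInf {c : ℝ | ∃ (m : ℕ) (φ : Fin m → ℂ → ℂ) (v : Fin m → D),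
    (∀ i, ContinuousOn (φ i) Strip) ∧
    (∀ i, DifferentiableOn ℂ (φ i) OStrip) ∧
    (∀ i, ∃ B : ℝ, ∀ z ∈ Strip, ‖φ i z‖ ≤ B) ∧
    (∑ i, φ i (θ : ℂ) • v i) = x ∧
    (∀ t : ℝ, N₀ (∑ i, φ i (Complex.I * t) • v i) ≤ c) ∧
    (∀ t : ℝ, N₁ (∑ i, φ i (1 + Complex.I * t) • v i) ≤ c)}

/-- Operator "norm" of a map with respect to given norm functions. -/
def opN {X Y : Type*} (NX : X → ℝ) (NY : Y → ℝ) (T : X → Y) : ℝ :=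
  sSup {r : ℝ | ∃ x, NX x ≤ 1 ∧ r = NY (T x)}

/-- The Hilbert space `ℓ₂`. -/
abbrev Hilb := lp (fun _ : ℕ => ℂ) 2

def hilbNorm (x : Hilb) : ℝ := ‖x‖

/-- `d_θ[M₀,M₁]`: the norm of the identity
`L(ℓ₂,[M₀,M₁]_θ) → [L(ℓ₂,M₀),L(ℓ₂,M₁)]_θ`. -/
def dTheta {V : Type*} [NormedAddCommGroup V] [NormedSpace ℂ V]
    (θ : ℝ) (N₀ N₁ : V → ℝ) : ℝ :=
  sSup {r : ℝ | ∃ T : Hilb →L[ℂ] V,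
    opN hilbNorm (interpN θ N₀ N₁) ⇑T ≤ 1 ∧
    r = interpN θ (fun S : Hilb →L[ℂ] V => opN hilbNorm N₀ ⇑S)
        (fun S : Hilb →L[ℂ] V => opN hilbNorm N₁ ⇑S) T}

/-- Rademacher average `(2^{-m} ∑_ε ‖∑ ±xᵢ‖²)`. -/
def radAvg {V : Type*} [AddCommGroup V] (N : V → ℝ) {m : ℕ} (x : Fin m → V) : ℝ :=
  ((2 : ℝ) ^ m)⁻¹ * ∑ ε : Fin m → Bool, N (∑ i, if ε i then x i else -x i) ^ 2

/-- `N` has (Rademacher) type 2 with constant `C`. -/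
def Type2With {V : Type*} [AddCommGroup V] (N : V → ℝ) (C : ℝ) : Prop :=
  ∀ (m : ℕ) (x : Fin m → V), Real.sqrt (radAvg N x) ≤ C * Real.sqrt (∑ i, N (x i) ^ 2)

/-- `N` has (Rademacher) cotype 2 with constant `C`. -/
def Cotype2With {V : Type*} [AddCommGroup V] (N : V → ℝ) (C : ℝ) : Prop :=
  ∀ (m : ℕ) (x : Fin m → V), Real.sqrt (∑ i, N (x i) ^ 2) ≤ C * Real.sqrt (radAvg N x)

/-- The injective tensor norm of two norm functions. -/
def injN {V W : Type*} [AddCommGroup V] [Module ℂ V] [AddCommGroup W] [Module ℂ W]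
    (NV : V → ℝ) (NW : W → ℝ) (z : TensorProduct ℂ V W) : ℝ :=
  sSup {r : ℝ | ∃ (φ : V →ₗ[ℂ] ℂ) (ψ : W →ₗ[ℂ] ℂ),
    (∀ x, ‖φ x‖ ≤ NV x) ∧ (∀ y, ‖ψ y‖ ≤ NW y) ∧
    r = ‖TensorProduct.lift (((LinearMap.mul ℂ ℂ).comp φ).compl₂ ψ) z‖}

/-- Dual norm on linear functionals. -/
def dualNC {V : Type*} [AddCommGroup V] [Module ℂ V] (N : V → ℝ) (φ : V →ₗ[ℂ] ℂ) : ℝ :=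
  sSup {r : ℝ | ∃ x, N x ≤ 1 ∧ r = ‖φ x‖}

/-- The space of bounded linear functionals (dual space of the completion). -/
def BddDual {V : Type*} [AddCommGroup V] [Module ℂ V] (N : V → ℝ) :
    Submodule ℂ (V →ₗ[ℂ] ℂ) where
  carrier := {φ | ∃ c : ℝ, ∀ x, ‖φ x‖ ≤ c * N x}
  zero_mem' := ⟨0, by simp⟩
  add_mem' := by
    rintro φ ψ ⟨c, hc⟩ ⟨d, hd⟩
    exact ⟨c + d, fun x => by
      have h1 := hc x; have h2 := hd x
      calc ‖(φ + ψ) x‖ = ‖φ x + ψ x‖ := by simp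
        _ ≤ ‖φ x‖ + ‖ψ x‖ := norm_add_le _ _
        _ ≤ (c + d) * N x := by rw [add_mul]; exact add_le_add h1 h2⟩
  smul_mem' := by
    rintro a φ ⟨c, hc⟩
    exact ⟨‖a‖ * c, fun x => by
      have : ‖(a • φ) x‖ = ‖a‖ * ‖φ x‖ := by simp [norm_smul]
      rw [this, mul_assoc]
      exact mul_le_mul_of_nonneg_left (hc x) (norm_nonneg a)⟩

/-- Strictly simple functions with values in `V`: the span of
`v`-valued indicators of finite-measure measurable sets. -/
def SimpleSub {Ω : Type*} [MeasurableSpace Ω] (μ : Measure Ω)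
    (V : Type*) [AddCommGroup V] [Module ℂ V] : Submodule ℂ (Ω → V) :=
  Submodule.span ℂ {f | ∃ (s : Set Ω) (v : V), MeasurableSet s ∧ μ s < ⊤ ∧
    f = s.indicator fun _ => v}

/-- A Banach function space over a measure `μ`, with `K`-valued functions. -/
structure BFS (Ω : Type*) [MeasurableSpace Ω] (μ : Measure Ω) (K : Type*) [RCLike K] where
  mem : (Ω → K) → Prop
  nrm : (Ω → K) → ℝ
  mem_zero : mem 0
  mem_add : ∀ f g, mem f → mem g → mem (f + g)
  mem_smul : ∀ (c : K) (f), mem f → mem (c • f)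
  mem_meas : ∀ f, mem f → AEStronglyMeasurable f μ
  ideal : ∀ f g, AEStronglyMeasurable f μ → mem g →
    (∀ᵐ ω ∂μ, ‖f ω‖ ≤ ‖g ω‖) → mem f ∧ nrm f ≤ nrm g
  nrm_nonneg : ∀ f, 0 ≤ nrm f
  nrm_eq_zero : ∀ f, mem f → nrm f = 0 → f =ᵐ[μ] 0
  nrm_add : ∀ f g, mem f → mem g → nrm (f + g) ≤ nrm f + nrm g
  nrm_smul : ∀ (c : K) (f), nrm (c • f) = ‖c‖ * nrm f
  mem_indicator : ∀ s : Set Ω, MeasurableSet s → μ s < ⊤ →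
    mem (s.indicator fun _ => 1)
  complete : ∀ f : ℕ → Ω → K, (∀ k, mem (f k)) →
    (∀ ε : ℝ, 0 < ε → ∃ N : ℕ, ∀ p q, N ≤ p → N ≤ q → nrm (f p - f q) < ε) →
    ∃ g, mem g ∧ ∀ ε : ℝ, 0 < ε → ∃ N : ℕ, ∀ p, N ≤ p → nrm (f p - g) < ε

variable {Ω : Type*} [MeasurableSpace Ω] {μ : Measure Ω} {K : Type*} [RCLike K]

/-- `X` is `r`-convex with constant `C`. -/
def BFS.RConvexWith (X : BFS Ω μ K) (r C : ℝ) : Prop :=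
  ∀ (m : ℕ) (f : Fin m → Ω → K), (∀ i, X.mem (f i)) →
    X.mem (fun ω => ((((∑ i, ‖f i ω‖ ^ r) ^ (1 / r) : ℝ) : K))) ∧
    X.nrm (fun ω => ((((∑ i, ‖f i ω‖ ^ r) ^ (1 / r) : ℝ) : K))) ≤
      C * (∑ i, X.nrm (f i) ^ r) ^ (1 / r)

/-- `X` is `r`-concave with constant `C`. -/
def BFS.RConcaveWith (X : BFS Ω μ K) (r C : ℝ) : Prop :=
  ∀ (m : ℕ) (f : Fin m → Ω → K), (∀ i, X.mem (f i)) →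
    (∑ i, X.nrm (f i) ^ r) ^ (1 / r) ≤
      C * X.nrm (fun ω => ((((∑ i, ‖f i ω‖ ^ r) ^ (1 / r) : ℝ) : K)))

namespace BooleanCube

variable {ι : Type*}

def sign (b : Bool) : ℝ := if b then 1 else -1

lemma sign_not (b : Bool) : sign (!b) = -sign b := by cases b <;> simp [sign]

def walsh (A : Finset ι) (ε : ι → Bool) : ℝ := ∏ i ∈ A, sign (ε i)

lemma walsh_not (A : Finset ι) (ε : ι → Bool) :
    walsh A (fun i => !ε i) = (-1) ^ #A * walsh A ε := by
  simp [walsh, sign_not, prod_neg]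

section flip

variable [DecidableEq ι]

def flipAt (i : ι) (ε : ι → Bool) : ι → Bool := Function.update ε i (!ε i)

lemma flipAt_involutive (i : ι) : Function.Involutive (flipAt i) := by
  intro ε
  simp [flipAt]

lemma walsh_flipAt (A : Finset ι) (i : ι) (ε : ι → Bool) :
    walsh A (flipAt i ε) = (if i ∈ A then -1 else 1) * walsh A ε := by
  have hsign (j : ι) : sign (flipAt i ε j) = (if j = i then -1 else 1) * sign (ε j) := by
    by_cases h : j = i
    · subst h; simp [flipAt, sign_not]
    · simp [flipAt, h]
  simp only [walsh, hsign, prod_mul_distrib, prod_ite_eq']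

end flip

section signedSum

variable [Fintype ι] {E : Type*}

def signedSum [AddCommGroup E] (v : ι → E) (ε : ι → Bool) : E :=
  ∑ i, if ε i then v i else -v i

lemma signedSum_not [AddCommGroup E] (v : ι → E) (ε : ι → Bool) :
    signedSum v (fun i => !ε i) = -signedSum v ε := by
  simp only [signedSum, ← sum_neg_distrib]
  exact sum_congr rfl fun i _ => by by_cases h : ε i <;> simp [h]

lemma signedSum_eq_sum_walsh [AddCommGroup E] [Module ℝ E] (v : ι → E) (ε : ι → Bool) :
    signedSum v ε = ∑ i, walsh {i} ε • v i :=
  sum_congr rfl fun i _ => by by_cases h : ε i <;> simp [h, walsh, sign]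

lemma norm_signedSum_le [SeminormedAddCommGroup E] (v : ι → E) (ε : ι → Bool) :
    ‖signedSum v ε‖ ≤ ∑ i, ‖v i‖ :=
  (norm_sum_le _ _).trans_eq (sum_congr rfl fun i _ => by by_cases h : ε i <;> simp [h])

end signedSum

variable [Fintype ι] [DecidableEq ι]

lemma sum_walsh_mul_walsh (ε δ : ι → Bool) :
    ∑ A : Finset ι, walsh A ε * walsh A δ = if ε = δ then 2 ^ Fintype.card ι else 0 := by
  have hfactor (i : ι) : sign (ε i) * sign (δ i) + 1 = if ε i = δ i then 2 else 0 := by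
    cases ε i <;> cases δ i <;> norm_num [sign]
  calc ∑ A : Finset ι, walsh A ε * walsh A δ
      = ∏ i, (sign (ε i) * sign (δ i) + 1) := by
        simp [Fintype.prod_add, walsh, prod_mul_distrib]
    _ = _ := by
        simp only [hfactor]
        split_ifs with h
        · simp [h]
        · obtain ⟨i, hi⟩ := Function.ne_iff.mp h
          exact prod_eq_zero (mem_univ i) (if_neg hi)

lemma sum_ite_mem_neg_one (A : Finset ι) :
    ∑ i, (if i ∈ A then -1 else 1 : ℝ) = Fintype.card ι - 2 * #A := by
  calc ∑ i, (if i ∈ A then -1 else 1 : ℝ)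
      = ∑ i, (1 - 2 * if i ∈ A then 1 else 0 : ℝ) :=
        sum_congr rfl fun i _ => by split_ifs <;> norm_num
    _ = _ := by simp [sum_sub_distrib]; ring

def walshCoeff (f : (ι → Bool) → ℝ) (A : Finset ι) : ℝ := ∑ ε, f ε * walsh A ε

lemma walshCoeff_empty (f : (ι → Bool) → ℝ) : walshCoeff f ∅ = ∑ ε, f ε := by
  simp [walshCoeff, walsh]

lemma sum_walshCoeff_mul_walshCoeff (f g : (ι → Bool) → ℝ) :
    ∑ A, walshCoeff f A * walshCoeff g A = 2 ^ Fintype.card ι * ∑ ε, f ε * g ε := by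
  calc ∑ A, walshCoeff f A * walshCoeff g A
      = ∑ ε, ∑ δ, f ε * g δ * ∑ A : Finset ι, walsh A ε * walsh A δ := by
        simp_rw [walshCoeff, sum_mul_sum, mul_sum]
        rw [sum_comm]
        refine sum_congr rfl fun ε _ => ?_
        rw [sum_comm]
        exact sum_congr rfl fun δ _ => sum_congr rfl fun A _ => by ring
    _ = _ := by simp [sum_walsh_mul_walsh, mul_sum, mul_comm]

lemma walshCoeff_comp {σ : (ι → Bool) → ι → Bool} (hσ : Function.Involutive σ) {A : Finset ι}
    {c : ℝ} (hw : ∀ ε, walsh A (σ ε) = c * walsh A ε) (f : (ι → Bool) → ℝ) :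
    walshCoeff (f ∘ σ) A = c * walshCoeff f A := by
  rw [walshCoeff, ← Equiv.sum_comp hσ.toPerm, walshCoeff, mul_sum]
  refine sum_congr rfl fun ε _ => ?_
  simp [hσ ε, hw]
  ring

lemma walshCoeff_eq_zero_of_odd {f : (ι → Bool) → ℝ} (hf : ∀ ε, f (fun i => !ε i) = f ε)
    {A : Finset ι} (hA : Odd #A) : walshCoeff f A = 0 := by
  have hinv : Function.Involutive fun (ε : ι → Bool) i => !ε i := fun ε => by simp
  have h := walshCoeff_comp hinv (walsh_not A) f
  rw [show f ∘ (fun ε i => !ε i) = f from funext hf, hA.neg_one_pow] at h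
  linarith

def flipSum (f : (ι → Bool) → ℝ) (ε : ι → Bool) : ℝ := ∑ i, f (flipAt i ε)

lemma walshCoeff_flipSum (f : (ι → Bool) → ℝ) (A : Finset ι) :
    walshCoeff (flipSum f) A = (Fintype.card ι - 2 * #A) * walshCoeff f A := by
  have hlin : walshCoeff (flipSum f) A = ∑ i, walshCoeff (f ∘ flipAt i) A := by
    simp only [walshCoeff, flipSum, sum_mul, Function.comp]
    exact sum_comm
  rw [hlin, ← sum_ite_mem_neg_one, sum_mul]
  exact sum_congr rfl fun i _ => walshCoeff_comp (flipAt_involutive i) (walsh_flipAt A i) f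

/-- Latała–Oleszkiewicz: in Walsh coordinates the hypothesis reads `∑ #A ĉ_A² ≤ ∑ ĉ_A²`, and
evenness kills the coefficients with `#A = 1`, so all `ĉ_A` with `A ≠ ∅` carry at most half of
the mass. -/
theorem sum_sq_le_of_flipSum_ge {f : (ι → Bool) → ℝ} (hf : ∀ ε, 0 ≤ f ε)
    (heven : ∀ ε, f (fun i => !ε i) = f ε)
    (hflip : ∀ ε, (Fintype.card ι - 2) * f ε ≤ flipSum f ε) :
    2 ^ Fintype.card ι * ∑ ε, f ε ^ 2 ≤ 2 * (∑ ε, f ε) ^ 2 := by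
  set n := Fintype.card ι
  set c := walshCoeff f
  have parseval : ∑ A, c A ^ 2 = 2 ^ n * ∑ ε, f ε ^ 2 := by
    simpa [sq] using sum_walshCoeff_mul_walshCoeff f f
  have energy : ∑ A, ((n : ℝ) - 2 * #A) * c A ^ 2 = 2 ^ n * ∑ ε, f ε * flipSum f ε := by
    rw [← sum_walshCoeff_mul_walshCoeff]
    exact sum_congr rfl fun A _ => by rw [walshCoeff_flipSum]; ring
  have dirichlet : ∑ A, (#A : ℝ) * c A ^ 2 ≤ ∑ A, c A ^ 2 := by
    have hpoint : ((n : ℝ) - 2) * ∑ ε, f ε ^ 2 ≤ ∑ ε, f ε * flipSum f ε := by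
      rw [mul_sum]
      refine sum_le_sum fun ε _ => ?_
      calc ((n : ℝ) - 2) * f ε ^ 2 = f ε * ((n - 2) * f ε) := by ring
        _ ≤ f ε * flipSum f ε := mul_le_mul_of_nonneg_left (hflip ε) (hf ε)
    have hsplit : ∑ A, ((n : ℝ) - 2 * #A) * c A ^ 2
        = n * ∑ A, c A ^ 2 - 2 * ∑ A, (#A : ℝ) * c A ^ 2 := by
      simp only [sub_mul, sum_sub_distrib, mul_sum, mul_assoc]
    have := mul_le_mul_of_nonneg_left hpoint (by positivity : (0 : ℝ) ≤ 2 ^ n)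
    rw [← energy, hsplit, mul_left_comm, ← parseval] at this
    linarith
  have hdeg (A : Finset ι) : c A ^ 2 ≤ (if A = ∅ then c A ^ 2 else 0) + #A * c A ^ 2 / 2 := by
    obtain rfl | hA := eq_or_ne A ∅
    · simp
    obtain h1 | h2 := lt_or_ge #A 2
    · have : #A = 1 := by have := card_pos.2 (nonempty_iff_ne_empty.2 hA); omega
      simp [walshCoeff_eq_zero_of_odd heven (this ▸ odd_one : Odd #A), c]
    · have : (2 : ℝ) ≤ #A := by exact_mod_cast h2
      rw [if_neg hA]
      nlinarith [sq_nonneg (c A)]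
  have := sum_le_sum fun A (_ : A ∈ univ) => hdeg A
  rw [sum_add_distrib, sum_ite_eq' univ ∅ fun A => c A ^ 2, if_pos (mem_univ _),
    ← sum_div] at this
  rw [← parseval, ← walshCoeff_empty]
  linarith

lemma sum_signedSum_flipAt {E : Type*} [AddCommGroup E] [Module ℝ E] (v : ι → E)
    (ε : ι → Bool) :
    ∑ i, signedSum v (flipAt i ε) = ((Fintype.card ι : ℝ) - 2) • signedSum v ε := by
  simp only [signedSum_eq_sum_walsh, walsh_flipAt, smul_sum, mul_smul]
  rw [sum_comm]
  refine sum_congr rfl fun j _ => ?_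
  rw [← sum_smul, sum_ite_mem_neg_one, card_singleton, Nat.cast_one, mul_one]

theorem sum_norm_signedSum_sq_le {E : Type*} [SeminormedAddCommGroup E] [NormedSpace ℝ E]
    (v : ι → E) :
    2 ^ Fintype.card ι * ∑ ε, ‖signedSum v ε‖ ^ 2 ≤ 2 * (∑ ε, ‖signedSum v ε‖) ^ 2 := by
  refine sum_sq_le_of_flipSum_ge (fun _ => norm_nonneg _)
    (fun ε => by rw [signedSum_not, norm_neg]) fun ε => ?_
  calc ((Fintype.card ι : ℝ) - 2) * ‖signedSum v ε‖
      ≤ ‖((Fintype.card ι : ℝ) - 2) • signedSum v ε‖ := by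
        rw [norm_smul, Real.norm_eq_abs]
        exact mul_le_mul_of_nonneg_right (le_abs_self _) (norm_nonneg _)
    _ = ‖∑ i, signedSum v (flipAt i ε)‖ := by rw [sum_signedSum_flipAt]
    _ ≤ flipSum (fun ε => ‖signedSum v ε‖) ε := norm_sum_le _ _

end BooleanCube

lemma mean_le_sqrt_mean_sq {α : Type*} [Fintype α] (f : α → ℝ) :
    (Fintype.card α : ℝ)⁻¹ * ∑ a, f a ≤ √((Fintype.card α : ℝ)⁻¹ * ∑ a, f a ^ 2) := by
  refine (le_abs_self _).trans (Real.abs_le_sqrt ?_)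
  simpa [div_eq_inv_mul] using sum_div_card_sq_le_sum_sq_div_card (s := univ) (f := f)

open BooleanCube

theorem sqrt_radAvg_norm_le {E : Type*} [SeminormedAddCommGroup E] [NormedSpace ℝ E] {m : ℕ}
    (v : Fin m → E) :
    √(radAvg (fun e : E => ‖e‖) v) ≤ √2 * (((2 : ℝ) ^ m)⁻¹ * ∑ ε, ‖signedSum v ε‖) := by
  have hk := sum_norm_signedSum_sq_le v
  rw [Fintype.card_fin] at hk
  rw [← Real.sqrt_sq (by positivity : (0 : ℝ) ≤ ((2 : ℝ) ^ m)⁻¹ * ∑ ε, ‖signedSum v ε‖),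
    ← Real.sqrt_mul zero_le_two]
  refine Real.sqrt_le_sqrt ?_
  calc ((2 : ℝ) ^ m)⁻¹ * ∑ ε, ‖signedSum v ε‖ ^ 2
      = (((2 : ℝ) ^ m) ^ 2)⁻¹ * (2 ^ m * ∑ ε, ‖signedSum v ε‖ ^ 2) := by field_simp
    _ ≤ (((2 : ℝ) ^ m) ^ 2)⁻¹ * (2 * (∑ ε, ‖signedSum v ε‖) ^ 2) := by gcongr
    _ = 2 * (((2 : ℝ) ^ m)⁻¹ * ∑ ε, ‖signedSum v ε‖) ^ 2 := by ring

lemma Cotype2With.norm_eq_zero_of_neg {E : Type*} [SeminormedAddCommGroup E] {C : ℝ}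
    (hE : Cotype2With (fun e : E => ‖e‖) C) (hC : C < 0) (e : E) : ‖e‖ = 0 := by
  have h := hE 1 fun _ => e
  rw [Fin.sum_univ_one, Real.sqrt_sq (norm_nonneg e)] at h
  exact le_antisymm (h.trans (mul_nonpos_of_nonpos_of_nonneg hC.le (Real.sqrt_nonneg _)))
    (norm_nonneg e)

namespace BFS

section RCLike

variable (X : BFS Ω μ K)

lemma nrm_zero : X.nrm 0 = 0 := by simpa using X.nrm_smul 0 0

lemma mem_sum {ι : Type*} (s : Finset ι) {f : ι → Ω → K} (hf : ∀ i ∈ s, X.mem (f i)) :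
    X.mem (∑ i ∈ s, f i) :=
  sum_induction f X.mem X.mem_add X.mem_zero hf

lemma nrm_sum_le {ι : Type*} (s : Finset ι) {f : ι → Ω → K} (hf : ∀ i ∈ s, X.mem (f i)) :
    X.nrm (∑ i ∈ s, f i) ≤ ∑ i ∈ s, X.nrm (f i) :=
  le_sum_of_subadditive_on_pred X.nrm X.mem X.nrm_zero.le X.nrm_add X.mem_add f hf

variable {X}

lemma RConcaveWith.nrm_eq_zero_of_neg {r M : ℝ} (hX : X.RConcaveWith r M) (hr : r ≠ 0)
    (hM : M < 0) {f : Ω → K} (hf : X.mem f) : X.nrm f = 0 := by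
  have h := hX 1 (fun _ => f) fun _ => hf
  rw [Fin.sum_univ_one, one_div, Real.rpow_rpow_inv (X.nrm_nonneg f) hr] at h
  exact le_antisymm (h.trans (mul_nonpos_of_nonpos_of_nonneg hM.le (X.nrm_nonneg _)))
    (X.nrm_nonneg f)

end RCLike

variable (X : BFS Ω μ ℝ)

lemma mem_and_nrm_le_of_le {f g : Ω → ℝ} (hf : AEStronglyMeasurable f μ) (hg : X.mem g)
    (hf0 : ∀ ω, 0 ≤ f ω) (hfg : ∀ ω, f ω ≤ g ω) : X.mem f ∧ X.nrm f ≤ X.nrm g :=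
  X.ideal f g hf hg <| ae_of_all _ fun ω => by
    rw [Real.norm_of_nonneg (hf0 ω), Real.norm_of_nonneg ((hf0 ω).trans (hfg ω))]
    exact hfg ω

variable {X}

lemma RConcaveWith.sqrt_sum_sq_nrm_le {M : ℝ} (hX : X.RConcaveWith 2 M) {m : ℕ}
    {f : Fin m → Ω → ℝ} (hf : ∀ i, X.mem (f i)) :
    √(∑ i, X.nrm (f i) ^ 2) ≤ M * X.nrm (fun ω => √(∑ i, f i ω ^ 2)) := by
  simpa [Real.sqrt_eq_rpow, Real.rpow_two] using hX m f hf

section Vector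

variable {E : Type*} [NormedAddCommGroup E] {m : ℕ} {x : Fin m → Ω → E}

lemma aestronglyMeasurable_signedSum (hx : ∀ i, AEStronglyMeasurable (x i) μ)
    (ε : Fin m → Bool) : AEStronglyMeasurable (fun ω => signedSum (fun i => x i ω) ε) μ :=
  Finset.aestronglyMeasurable_fun_sum _ fun i _ => by
    by_cases h : ε i
    · simpa [h] using hx i
    · simpa [h] using (hx i).fun_neg

variable (X) in
lemma mem_norm_signedSum (hx : ∀ i, AEStronglyMeasurable (x i) μ ∧ X.mem fun ω => ‖x i ω‖)
    (ε : Fin m → Bool) : X.mem fun ω => ‖signedSum (fun i => x i ω) ε‖ := by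
  refine (X.mem_and_nrm_le_of_le (aestronglyMeasurable_signedSum (fun i => (hx i).1) ε).norm
    (X.mem_sum univ fun i _ => (hx i).2) (fun _ => norm_nonneg _) fun ω => ?_).1
  simpa [Finset.sum_apply] using norm_signedSum_le (fun i => x i ω) ε

variable (X) in
lemma radAvg_nrm_eq (x : Fin m → Ω → E) :
    radAvg (fun y : Ω → E => X.nrm fun ω => ‖y ω‖) x =
      ((2 : ℝ) ^ m)⁻¹ * ∑ ε, X.nrm (fun ω => ‖signedSum (fun i => x i ω) ε‖) ^ 2 := by
  simp only [radAvg, signedSum, Finset.sum_apply, ite_apply, Pi.neg_apply]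

lemma nrm_sqrt_sum_sq_le [NormedSpace ℝ E] {C : ℝ} (hE : Cotype2With (fun e : E => ‖e‖) C)
    (hC : 0 ≤ C) (hx : ∀ i, AEStronglyMeasurable (x i) μ ∧ X.mem fun ω => ‖x i ω‖) :
    X.nrm (fun ω => √(∑ i, ‖x i ω‖ ^ 2)) ≤
      √2 * C * (((2 : ℝ) ^ m)⁻¹ * ∑ ε, X.nrm fun ω => ‖signedSum (fun i => x i ω) ε‖) := by
  set S : (Fin m → Bool) → Ω → ℝ := fun ε ω => ‖signedSum (fun i => x i ω) ε‖
  have hpoint (ω : Ω) : √(∑ i, ‖x i ω‖ ^ 2) ≤ (√2 * C * ((2 : ℝ) ^ m)⁻¹) * ∑ ε, S ε ω :=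
    calc √(∑ i, ‖x i ω‖ ^ 2) ≤ C * √(radAvg (fun e : E => ‖e‖) fun i => x i ω) := hE m _
      _ ≤ C * (√2 * (((2 : ℝ) ^ m)⁻¹ * ∑ ε, S ε ω)) := by gcongr; exact sqrt_radAvg_norm_le _
      _ = _ := by ring
  have hmeas : AEStronglyMeasurable (fun ω => √(∑ i, ‖x i ω‖ ^ 2)) μ :=
    (Finset.aemeasurable_fun_sum _ fun i _ =>
      ((hx i).1.norm.aemeasurable.pow_const 2)).sqrt.aestronglyMeasurable
  have hS : ∀ ε ∈ univ, X.mem (S ε) := fun ε _ => X.mem_norm_signedSum hx ε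
  calc X.nrm (fun ω => √(∑ i, ‖x i ω‖ ^ 2))
      ≤ X.nrm ((√2 * C * ((2 : ℝ) ^ m)⁻¹) • ∑ ε, S ε) :=
        (X.mem_and_nrm_le_of_le hmeas (X.mem_smul _ _ (X.mem_sum univ hS))
          (fun _ => Real.sqrt_nonneg _) fun ω => by simpa [Finset.sum_apply] using hpoint ω).2
    _ ≤ (√2 * C * ((2 : ℝ) ^ m)⁻¹) * ∑ ε, X.nrm (S ε) := by
        rw [X.nrm_smul, Real.norm_of_nonneg (by positivity)]
        gcongr
        exact X.nrm_sum_le univ hS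
    _ = _ := by ring

end Vector

end BFS

theorem statement7_general {Ω' : Type*} [MeasurableSpace Ω'] (μ : Measure Ω')
    (X : BFS Ω' μ ℝ)
    (M : ℝ) (hX : X.RConcaveWith 2 M)
    {E : Type*} [NormedAddCommGroup E] [NormedSpace ℝ E]
    (C : ℝ) (hE : Cotype2With (fun e : E => ‖e‖) C)
    (m : ℕ) (x : Fin m → Ω' → E)
    (hx : ∀ i, AEStronglyMeasurable (x i) μ ∧ X.mem fun ω => ‖x i ω‖) :
    Real.sqrt (∑ i, (X.nrm fun ω => ‖x i ω‖) ^ 2) ≤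
      (Real.sqrt 2 * M * C) *
        Real.sqrt (radAvg (fun y : Ω' → E => X.nrm fun ω => ‖y ω‖) x) := by
  rw [X.radAvg_nrm_eq]
  obtain hM | hM := lt_or_ge M 0
  · have hzero {f : Ω' → ℝ} (hf : X.mem f) := hX.nrm_eq_zero_of_neg two_ne_zero hM hf
    simp [hzero (hx _).2, hzero (X.mem_norm_signedSum hx _)]
  obtain hC | hC := lt_or_ge C 0
  · simp [hE.norm_eq_zero_of_neg hC, ← Pi.zero_def, X.nrm_zero]
  calc √(∑ i, (X.nrm fun ω => ‖x i ω‖) ^ 2)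
      ≤ M * X.nrm (fun ω => √(∑ i, ‖x i ω‖ ^ 2)) := hX.sqrt_sum_sq_nrm_le fun i => (hx i).2
    _ ≤ M * (√2 * C *
          (((2 : ℝ) ^ m)⁻¹ * ∑ ε, X.nrm fun ω => ‖signedSum (fun i => x i ω) ε‖)) := by
        gcongr
        exact X.nrm_sqrt_sum_sq_le hE hC hx
    _ ≤ M * (√2 * C *
          √(((2 : ℝ) ^ m)⁻¹ * ∑ ε, (X.nrm fun ω => ‖signedSum (fun i => x i ω) ε‖) ^ 2)) := by
        gcongr
        simpa using mean_le_sqrt_mean_sq fun ε => X.nrm fun ω => ‖signedSum (fun i => x i ω) ε‖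
    _ = _ := by ring

/-- if `X` is 2-concave and `E` has cotype 2, then `X(E)` has
cotype 2 with `C₂(X(E)) ≤ √2 · M_(2)(X) · C₂(E)`. -/
theorem statement7 {Ω' : Type*} [MeasurableSpace Ω'] (μ : Measure Ω')
    [SigmaFinite μ] (hμc : μ.IsComplete) (X : BFS Ω' μ ℝ)
    (M : ℝ) (hX : X.RConcaveWith 2 M)
    {E : Type*} [NormedAddCommGroup E] [NormedSpace ℝ E] [CompleteSpace E]
    (C : ℝ) (hE : Cotype2With (fun e : E => ‖e‖) C)
    (m : ℕ) (x : Fin m → Ω' → E)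
    (hx : ∀ i, AEStronglyMeasurable (x i) μ ∧ X.mem fun ω => ‖x i ω‖) :
    Real.sqrt (∑ i, (X.nrm fun ω => ‖x i ω‖) ^ 2) ≤
      (Real.sqrt 2 * M * C) *
        Real.sqrt (radAvg (fun y : Ω' → E => X.nrm fun ω => ‖y ω‖) x) :=
  statement7_general μ X M hX C hE m x hx

end Paper
end
end

section
/- Let [M₀,M₁] and [N₀,N₁] be interpolation couples of finite-dimensional Banach spaces (same underlying spaces with two norms) and 0 < θ < 1. Then the identity map from the complex interpolation space [L(M₀,N₀), L(M₁,N₁)]_θ into L([M₀,M₁]_θ, [N₀,N₁]_θ) has norm at most 1. -/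
open Complex MeasureTheory Finset

noncomputable section

namespace Paper

variable {Ω : Type*} [MeasurableSpace Ω] {μ : Measure Ω} {K : Type*} [RCLike K]

/-! Complex interpolation is multiplicative for bilinear maps: if `F` and `G` are analytic
families of finite type on the strip with `F θ = u`, `G θ = v`, then `z ↦ B (F z) (G z)` is again
of finite type, takes the value `B u v` at `θ`, and on each boundary line its norm is bounded by
the product of the bounds of `F` and `G`, provided `B` has norm at most `1` at both endpoints.
Taking infima gives `‖B u v‖_θ ≤ ‖u‖_θ ‖v‖_θ`. The theorem is the case of the evaluation map
`(S, x) ↦ S x`, which has norm at most `1` at both endpoints because linear maps between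
finite-dimensional normed spaces are bounded, so `opN` is a genuine operator norm. -/

def IsBoundedHolomorphicOnStrip (f : ℂ → ℂ) : Prop :=
  ContinuousOn f Strip ∧ DifferentiableOn ℂ f OStrip ∧ ∃ B : ℝ, ∀ z ∈ Strip, ‖f z‖ ≤ B

lemma isBoundedHolomorphicOnStrip_const (a : ℂ) :
    IsBoundedHolomorphicOnStrip fun _ => a :=
  ⟨continuousOn_const, differentiableOn_const a, ‖a‖, fun _ _ => le_rfl⟩

lemma IsBoundedHolomorphicOnStrip.mul {f g : ℂ → ℂ} (hf : IsBoundedHolomorphicOnStrip f)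
    (hg : IsBoundedHolomorphicOnStrip g) : IsBoundedHolomorphicOnStrip fun z => f z * g z := by
  obtain ⟨hfc, hfd, Bf, hBf⟩ := hf
  obtain ⟨hgc, hgd, Bg, hBg⟩ := hg
  have h0 : (0 : ℂ) ∈ Strip := by simp [Strip]
  refine ⟨hfc.mul hgc, hfd.mul hgd, Bf * Bg, fun z hz => ?_⟩
  rw [norm_mul]
  exact mul_le_mul (hBf z hz) (hBg z hz) (norm_nonneg _) ((norm_nonneg _).trans (hBf 0 h0))

lemma le_sInf_mul_sInf {A B : Set ℝ} {g : ℝ} (hA : A.Nonempty) (hB : B.Nonempty)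
    (hA₀ : ∀ a ∈ A, 0 ≤ a) (hB₀ : ∀ b ∈ B, 0 ≤ b) (h : ∀ a ∈ A, ∀ b ∈ B, g ≤ a * b) :
    g ≤ sInf A * sInf B := by
  have hleft : ∀ a ∈ A, g ≤ a * sInf B := fun a ha => by
    rw [← smul_eq_mul, ← Real.sInf_smul_of_nonneg (hA₀ a ha)]
    exact le_csInf hB.smul_set (by rintro _ ⟨b, hb, rfl⟩; exact h a ha b hb)
  rw [mul_comm, ← smul_eq_mul, ← Real.sInf_smul_of_nonneg (Real.sInf_nonneg hB₀)]
  exact le_csInf hA.smul_set (by rintro _ ⟨a, ha, rfl⟩; simpa [mul_comm] using hleft a ha)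

section FiniteType

variable {U V W D : Type*} [AddCommGroup U] [Module ℂ U] [AddCommGroup V] [Module ℂ V]
  [AddCommGroup W] [Module ℂ W] [AddCommGroup D] [Module ℂ D]

def IsFiniteTypeOnStrip (F : ℂ → D) : Prop :=
  ∃ (ι : Type) (_ : Fintype ι) (φ : ι → ℂ → ℂ) (v : ι → D),
    (∀ i, IsBoundedHolomorphicOnStrip (φ i)) ∧ F = fun z => ∑ i, φ i z • v i

lemma isFiniteTypeOnStrip_const (x : D) : IsFiniteTypeOnStrip fun _ : ℂ => x :=
  ⟨Unit, inferInstance, fun _ _ => 1, fun _ => x,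
    fun _ => isBoundedHolomorphicOnStrip_const 1, by simp⟩

lemma IsFiniteTypeOnStrip.map₂ (B : U →ₗ[ℂ] V →ₗ[ℂ] W) {F : ℂ → U} {G : ℂ → V}
    (hF : IsFiniteTypeOnStrip F) (hG : IsFiniteTypeOnStrip G) :
    IsFiniteTypeOnStrip fun z => B (F z) (G z) := by
  obtain ⟨ι, _, φ, u, hφ, rfl⟩ := hF
  obtain ⟨κ, _, ψ, v, hψ, rfl⟩ := hG
  refine ⟨ι × κ, inferInstance, fun p z => φ p.1 z * ψ p.2 z, fun p => B (u p.1) (v p.2),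
    fun p => (hφ p.1).mul (hψ p.2), ?_⟩
  ext z
  simp only [map_sum, map_smul, LinearMap.sum_apply, LinearMap.smul_apply, Fintype.sum_prod_type,
    Finset.smul_sum, smul_smul]
  rw [Finset.sum_comm]
  simp only [mul_comm (ψ _ z)]

def IsInterpBound (θ : ℝ) (N₀ N₁ : D → ℝ) (x : D) (c : ℝ) : Prop :=
  ∃ F : ℂ → D, IsFiniteTypeOnStrip F ∧ F θ = x ∧
    (∀ t : ℝ, N₀ (F (I * t)) ≤ c) ∧ ∀ t : ℝ, N₁ (F (1 + I * t)) ≤ c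

lemma interpN_eq_sInf (θ : ℝ) (N₀ N₁ : D → ℝ) (x : D) :
    interpN θ N₀ N₁ x = sInf {c | IsInterpBound θ N₀ N₁ x c} := by
  unfold interpN
  congr 1
  ext c
  constructor
  · rintro ⟨m, φ, v, hc, hd, hb, hθ, h₀, h₁⟩
    exact ⟨_, ⟨Fin m, inferInstance, φ, v, fun i => ⟨hc i, hd i, hb i⟩, rfl⟩, hθ, h₀, h₁⟩
  · rintro ⟨_, ⟨ι, _, φ, v, hφ, rfl⟩, hθ, h₀, h₁⟩
    let e := (Fintype.equivFin ι).symm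
    have hsum : ∀ z, ∑ i, φ (e i) z • v (e i) = ∑ i, φ i z • v i :=
      fun z => e.sum_comp fun i => φ i z • v i
    exact ⟨Fintype.card ι, fun i => φ (e i), fun i => v (e i), fun i => (hφ _).1,
      fun i => (hφ _).2.1, fun i => (hφ _).2.2, by rw [hsum]; exact hθ,
      fun t => by rw [hsum]; exact h₀ t, fun t => by rw [hsum]; exact h₁ t⟩

variable {θ : ℝ} {N₀ N₁ : D → ℝ} {x : D} {c : ℝ}

lemma isInterpBound_max : IsInterpBound θ N₀ N₁ x (max (N₀ x) (N₁ x)) :=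
  ⟨fun _ => x, isFiniteTypeOnStrip_const x, rfl, fun _ => le_max_left _ _,
    fun _ => le_max_right _ _⟩

lemma IsInterpBound.nonneg (hN₀ : ∀ y, 0 ≤ N₀ y) (h : IsInterpBound θ N₀ N₁ x c) : 0 ≤ c := by
  obtain ⟨F, -, -, hF₀, -⟩ := h
  exact (hN₀ _).trans (hF₀ 0)

lemma interpN_nonneg (hN₀ : ∀ y, 0 ≤ N₀ y) : 0 ≤ interpN θ N₀ N₁ x := by
  rw [interpN_eq_sInf]
  exact Real.sInf_nonneg fun _ h => h.nonneg hN₀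

lemma interpN_le (hN₀ : ∀ y, 0 ≤ N₀ y) (h : IsInterpBound θ N₀ N₁ x c) :
    interpN θ N₀ N₁ x ≤ c := by
  rw [interpN_eq_sInf]
  exact csInf_le ⟨0, fun _ h => h.nonneg hN₀⟩ h

variable {NU₀ NU₁ : U → ℝ} {NV₀ NV₁ : V → ℝ} {NW₀ NW₁ : W → ℝ}

lemma IsInterpBound.map₂ (B : U →ₗ[ℂ] V →ₗ[ℂ] W)
    (hB₀ : ∀ u v, NW₀ (B u v) ≤ NU₀ u * NV₀ v) (hB₁ : ∀ u v, NW₁ (B u v) ≤ NU₁ u * NV₁ v)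
    (hU₀ : ∀ u, 0 ≤ NU₀ u) (hV₀ : ∀ v, 0 ≤ NV₀ v) (hV₁ : ∀ v, 0 ≤ NV₁ v)
    {u : U} {v : V} {a b : ℝ}
    (hu : IsInterpBound θ NU₀ NU₁ u a) (hv : IsInterpBound θ NV₀ NV₁ v b) :
    IsInterpBound θ NW₀ NW₁ (B u v) (a * b) := by
  have ha : 0 ≤ a := hu.nonneg hU₀
  obtain ⟨F, hF, rfl, hF₀, hF₁⟩ := hu
  obtain ⟨G, hG, rfl, hG₀, hG₁⟩ := hv
  exact ⟨fun z => B (F z) (G z), hF.map₂ B hG, rfl,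
    fun t => (hB₀ _ _).trans (mul_le_mul (hF₀ t) (hG₀ t) (hV₀ _) ha),
    fun t => (hB₁ _ _).trans (mul_le_mul (hF₁ t) (hG₁ t) (hV₁ _) ha)⟩

theorem interpN_map₂_le (B : U →ₗ[ℂ] V →ₗ[ℂ] W)
    (hB₀ : ∀ u v, NW₀ (B u v) ≤ NU₀ u * NV₀ v) (hB₁ : ∀ u v, NW₁ (B u v) ≤ NU₁ u * NV₁ v)
    (hU₀ : ∀ u, 0 ≤ NU₀ u) (hV₀ : ∀ v, 0 ≤ NV₀ v) (hV₁ : ∀ v, 0 ≤ NV₁ v) (hW₀ : ∀ w, 0 ≤ NW₀ w)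
    (u : U) (v : V) :
    interpN θ NW₀ NW₁ (B u v) ≤ interpN θ NU₀ NU₁ u * interpN θ NV₀ NV₁ v := by
  rw [interpN_eq_sInf θ NU₀, interpN_eq_sInf θ NV₀]
  exact le_sInf_mul_sInf ⟨_, isInterpBound_max⟩ ⟨_, isInterpBound_max⟩
    (fun _ h => h.nonneg hU₀) (fun _ h => h.nonneg hV₀)
    fun a ha b hb => interpN_le hW₀ (ha.map₂ B hB₀ hB₁ hU₀ hV₀ hV₁ hb)

end FiniteType

lemma opN_nonneg {X Y : Type*} {NX : X → ℝ} {NY : Y → ℝ} (hNY : ∀ y, 0 ≤ NY y) (f : X → Y) :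
    0 ≤ opN NX NY f :=
  Real.sSup_nonneg (by rintro _ ⟨x, -, rfl⟩; exact hNY _)

section OperatorNorm

variable {V W : Type*} [AddCommGroup V] [Module ℂ V] [AddCommGroup W] [Module ℂ W]
  {NV : V → ℝ} {NW : W → ℝ}

lemma IsNormC.map_zero (h : IsNormC NV) : NV 0 = 0 := by
  simpa using h.2.2.1 0 0

def IsNormC.toAddGroupNorm (h : IsNormC NV) : AddGroupNorm V where
  toFun := NV
  map_zero' := h.map_zero
  add_le' := h.2.2.2
  neg' x := by simpa using h.2.2.1 (-1) x
  eq_zero_of_map_eq_zero' := h.2.1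

lemma IsNormC.exists_bound [FiniteDimensional ℂ V] (hV : IsNormC NV) (hW : IsNormC NW)
    (S : V →ₗ[ℂ] W) : ∃ C, 0 ≤ C ∧ ∀ x, NW (S x) ≤ C * NV x := by
  let := hV.toAddGroupNorm.toNormedAddCommGroup
  let : NormedSpace ℂ V := ⟨fun c x => (hV.2.2.1 c x).le⟩
  let := hW.toAddGroupNorm.toNormedAddCommGroup
  let : NormedSpace ℂ W := ⟨fun c x => (hW.2.2.1 c x).le⟩
  exact ⟨_, norm_nonneg _, (LinearMap.toContinuousLinearMap S).le_opNorm⟩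

lemma apply_le_opN [FiniteDimensional ℂ V] (hV : IsNormC NV) (hW : IsNormC NW)
    (S : V →ₗ[ℂ] W) (x : V) : NW (S x) ≤ opN NV NW S * NV x := by
  obtain ⟨C, hC₀, hC⟩ := hV.exists_bound hW S
  have hbdd : BddAbove {r | ∃ x, NV x ≤ 1 ∧ r = NW (S x)} :=
    ⟨C, by rintro _ ⟨y, hy, rfl⟩; exact (hC y).trans (mul_le_of_le_one_right hC₀ hy)⟩
  rcases (hV.1 x).eq_or_lt with hx | hx
  · rw [hV.2.1 x hx.symm, map_zero, hW.map_zero, hV.map_zero, mul_zero]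
  · have hnorm : ‖((NV x : ℂ))⁻¹‖ = (NV x)⁻¹ := by
      rw [norm_inv, Complex.norm_real, Real.norm_of_nonneg hx.le]
    have hunit : NV ((NV x : ℂ)⁻¹ • x) = 1 := by
      rw [hV.2.2.1, hnorm, inv_mul_cancel₀ hx.ne']
    have h := le_csSup hbdd ⟨_, hunit.le, rfl⟩
    rw [map_smul, hW.2.2.1, hnorm, inv_mul_le_iff₀ hx, mul_comm] at h
    exact h

end OperatorNorm

theorem statement10_general {n m : ℕ} (θ : ℝ)
    (NM₀ NM₁ : (Fin n → ℂ) → ℝ) (NN₀ NN₁ : (Fin m → ℂ) → ℝ)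
    (hM₀ : IsNormC NM₀) (hM₁ : IsNormC NM₁)
    (hN₀ : IsNormC NN₀) (hN₁ : IsNormC NN₁)
    (T : (Fin n → ℂ) →L[ℂ] (Fin m → ℂ)) :
    opN (interpN θ NM₀ NM₁) (interpN θ NN₀ NN₁) ⇑T ≤
      interpN θ (fun S : (Fin n → ℂ) →L[ℂ] (Fin m → ℂ) => opN NM₀ NN₀ ⇑S)
        (fun S : (Fin n → ℂ) →L[ℂ] (Fin m → ℂ) => opN NM₁ NN₁ ⇑S) T := by
  have hop : ∀ S : (Fin n → ℂ) →L[ℂ] (Fin m → ℂ), 0 ≤ opN NM₀ NN₀ ⇑S :=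
    fun S => opN_nonneg hN₀.1 S
  have hT : 0 ≤ interpN θ (fun S : (Fin n → ℂ) →L[ℂ] (Fin m → ℂ) => opN NM₀ NN₀ ⇑S)
      (fun S : (Fin n → ℂ) →L[ℂ] (Fin m → ℂ) => opN NM₁ NN₁ ⇑S) T :=
    interpN_nonneg hop
  refine Real.sSup_le ?_ hT
  rintro _ ⟨x, hx, rfl⟩
  calc interpN θ NN₀ NN₁ (T x)
      ≤ interpN θ (fun S : (Fin n → ℂ) →L[ℂ] (Fin m → ℂ) => opN NM₀ NN₀ ⇑S)
          (fun S : (Fin n → ℂ) →L[ℂ] (Fin m → ℂ) => opN NM₁ NN₁ ⇑S) T *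
          interpN θ NM₀ NM₁ x :=
        interpN_map₂_le (ContinuousLinearMap.coeLM ℂ)
          (fun S => apply_le_opN hM₀ hN₀ S.toLinearMap)
          (fun S => apply_le_opN hM₁ hN₁ S.toLinearMap) hop hM₀.1 hM₁.1 hN₀.1 T x
    _ ≤ _ := mul_le_of_le_one_right hT hx

/-- the identity `[L(M₀,N₀),L(M₁,N₁)]_θ → L([M₀,M₁]_θ,[N₀,N₁]_θ)`
has norm at most 1. -/
theorem statement10 {n m : ℕ} (θ : ℝ) (hθ : 0 < θ) (hθ1 : θ < 1)
    (NM₀ NM₁ : (Fin n → ℂ) → ℝ) (NN₀ NN₁ : (Fin m → ℂ) → ℝ)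
    (hM₀ : IsNormC NM₀) (hM₁ : IsNormC NM₁)
    (hN₀ : IsNormC NN₀) (hN₁ : IsNormC NN₁)
    (T : (Fin n → ℂ) →L[ℂ] (Fin m → ℂ)) :
    opN (interpN θ NM₀ NM₁) (interpN θ NN₀ NN₁) ⇑T ≤
      interpN θ (fun S : (Fin n → ℂ) →L[ℂ] (Fin m → ℂ) => opN NM₀ NN₀ ⇑S)
        (fun S : (Fin n → ℂ) →L[ℂ] (Fin m → ℂ) => opN NM₁ NN₁ ⇑S) T :=
  statement10_general θ NM₀ NM₁ NN₀ NN₁ hM₀ hM₁ hN₀ hN₁ T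

end Paper
end
end
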